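/- Let N be a positive integer and A, B, C, D complex numbers such that C, D and all relevant shifted parameters avoid nonpositive integers where needed. Then ₃F₂[A,B,-N; C,D; 1] = ((C-A)_N / (C)_N) · ₃F₂[A, D-B, -N; 1+A-C-N, D; 1]. -/

import Mathlib

open Complex Finset

/-- Pochhammer symbol `(a)_k = a(a+1)⋯(a+k-1)`. -/
noncomputable def poch (a : ℂ) (k : ℕ) : ℂ := ∏ i ∈ Finset.range k, (a + i)

/-- `z` is not a nonpositive integer. -/
def notNonposInt (z : ℂ) : Prop := ∀ k : ℕ, z ≠ -(k : ℂ)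

lemma poch_zero (a : ℂ) : poch a 0 = 1 := by simp [poch]

lemma poch_succ (a : ℂ) (k : ℕ) : poch a (k+1) = poch a k * (a + k) :=
  Finset.prod_range_succ _ _

lemma poch_add (a : ℂ) (j m : ℕ) : poch a (j + m) = poch a j * poch (a + j) m := by
  induction m with
  | zero => simp [poch_zero]
  | succ m ih =>
      rw [← Nat.add_assoc, poch_succ, ih, poch_succ]
      push_cast
      ring

lemma poch_one (a : ℂ) : poch a 1 = a := by simp [poch]

lemma poch_reflect (a : ℂ) (n : ℕ) : poch (1 - a - n) n = (-1)^n * poch a n := by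
  unfold poch
  rw [← Finset.prod_range_reflect (fun i => a + i) n,
    show ((-1 : ℂ))^n = ∏ _i ∈ Finset.range n, (-1 : ℂ) by simp,
    ← Finset.prod_mul_distrib]
  apply Finset.prod_congr rfl
  intro i hi
  rw [Finset.mem_range] at hi
  have h : ((n - 1 - i : ℕ) : ℂ) = (n : ℂ) - 1 - i := by
    push_cast [Nat.cast_sub (by omega : i ≤ n - 1), Nat.cast_sub (by omega : 1 ≤ n)]
    ring
  rw [h]
  ring

lemma poch_ne_zero_of_le {a : ℂ} {n : ℕ} (h : poch a n ≠ 0) {k : ℕ} (hk : k ≤ n) :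
    poch a k ≠ 0 := by
  have he : poch a n = poch a k * poch (a + k) (n - k) := by
    rw [← poch_add]; congr 1; omega
  rw [he] at h
  exact fun hz => h (by rw [hz, zero_mul])

lemma poch_neg_nat (N : ℕ) : ∀ {k : ℕ}, k ≤ N →
    poch (-(N : ℂ)) k = (-1)^k * (N.choose k) * (Nat.factorial k) := by
  intro k
  induction k with
  | zero => intro _; simp [poch_zero]
  | succ k ih =>
      intro hk
      rw [poch_succ, ih (by omega)]
      have h1 : (-(N:ℂ) + k) = -((N - k : ℕ) : ℂ) := by
        rw [Nat.cast_sub (by omega : k ≤ N)]; ring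
      have h2 : (N.choose (k+1) : ℂ) * ((k+1).factorial : ℂ)
          = (N.choose k) * (k.factorial) * ((N - k : ℕ) : ℂ) := by
        have : N.choose (k+1) * (k+1).factorial * (N - (k+1)).factorial = N.factorial :=
          Nat.choose_mul_factorial_mul_factorial hk
        have h3 : N.choose k * k.factorial * (N - k) * (N - (k+1)).factorial = N.factorial := by
          have h4 : N.choose k * k.factorial * (N - k).factorial = N.factorial :=
            Nat.choose_mul_factorial_mul_factorial (by omega)
          have h5 : (N - k).factorial = (N - k) * (N - (k+1)).factorial := by
            have : N - k = (N - (k+1)) + 1 := by omega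
            rw [this, Nat.factorial_succ]
          rw [← h4, h5]; ring
        have h6 : N.choose (k+1) * (k+1).factorial = N.choose k * k.factorial * (N - k) :=
          Nat.eq_of_mul_eq_mul_right (Nat.factorial_pos _) (by rw [this, h3])
        exact_mod_cast congrArg (fun x : ℕ => (x : ℂ)) h6
      rw [h1]
      have h7 : ((-1:ℂ))^(k+1) * (N.choose (k+1) : ℂ) * ((k+1).factorial : ℂ)
          = (-1)^k * (N.choose k : ℂ) * (k.factorial : ℂ) * (-((N - k : ℕ) : ℂ)) := by
        calc ((-1:ℂ))^(k+1) * (N.choose (k+1) : ℂ) * ((k+1).factorial : ℂ)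
            = (-1)^(k+1) * ((N.choose (k+1) : ℂ) * ((k+1).factorial : ℂ)) := by ring
          _ = (-1)^(k+1) * ((N.choose k : ℂ) * (k.factorial : ℂ) * ((N - k : ℕ) : ℂ)) := by
              rw [h2]
          _ = (-1)^k * (N.choose k : ℂ) * (k.factorial : ℂ) * (-((N - k : ℕ) : ℂ)) := by ring
      rw [h7]

lemma chu (n : ℕ) : ∀ b c : ℂ,
    (∑ j ∈ Finset.range (n+1),
      (-1:ℂ)^j * (n.choose j : ℂ) * poch b j * poch (c + j) (n - j)) = poch (c - b) n := by
  induction n with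
  | zero => intro b c; simp [poch_zero]
  | succ n ih =>
      intro b c
      rw [Finset.sum_range_succ']
      have key : ∀ j ∈ Finset.range (n+1),
          (-1:ℂ)^(j+1) * ((n+1).choose (j+1) : ℂ) * poch b (j+1) *
              poch (c + ((j+1 : ℕ) : ℂ)) (n + 1 - (j+1))
          = ((-1:ℂ)^(j+1) * (n.choose (j+1) : ℂ) * poch b (j+1) *
              poch (c + ((j+1 : ℕ) : ℂ)) (n + 1 - (j+1)))
            + (-b) * ((-1:ℂ)^j * (n.choose j : ℂ) * poch (b+1) j *
              poch ((c+1) + (j : ℂ)) (n - j)) := by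
        intro j hj
        rw [Finset.mem_range] at hj
        have hch : (((n+1).choose (j+1) : ℕ) : ℂ) = (n.choose (j+1) : ℂ) + (n.choose j : ℂ) := by
          rw [Nat.choose_succ_succ]; push_cast; ring
        have hb : poch b (j+1) = b * poch (b+1) j := by
          rw [show j + 1 = 1 + j by omega, poch_add]
          simp [poch_succ, poch_zero]
        have hc : poch (c + ((j+1 : ℕ) : ℂ)) (n + 1 - (j+1)) = poch ((c+1) + (j:ℂ)) (n - j) := by
          have : (c + ((j+1 : ℕ) : ℂ)) = (c+1) + (j : ℂ) := by push_cast; ring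
          rw [this, Nat.succ_sub_succ]
        rw [hch, hb, hc]
        ring
      rw [Finset.sum_congr rfl key, Finset.sum_add_distrib]
      -- second sum = -b * poch (c-b) n
      have hB : (∑ j ∈ Finset.range (n+1),
          (-b) * ((-1:ℂ)^j * (n.choose j : ℂ) * poch (b+1) j *
            poch ((c+1) + (j : ℂ)) (n - j))) = (-b) * poch (c - b) n := by
        rw [← Finset.mul_sum, ih (b+1) (c+1)]
        congr 1
        ring_nf
      rw [hB]
      -- first sum + f 0 = (c+n) * poch (c-b) n
      have hA : (∑ j ∈ Finset.range (n+1),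
            (-1:ℂ)^(j+1) * (n.choose (j+1) : ℂ) * poch b (j+1) *
              poch (c + ((j+1 : ℕ) : ℂ)) (n + 1 - (j+1)))
          + (-1:ℂ)^0 * ((n+1).choose 0 : ℂ) * poch b 0 * poch (c + ((0:ℕ):ℂ)) (n + 1 - 0)
          = (c + (n:ℂ)) * poch (c - b) n := by
        have h0 : (-1:ℂ)^0 * ((n+1).choose 0 : ℂ) * poch b 0 * poch (c + ((0:ℕ):ℂ)) (n + 1 - 0)
            = (-1:ℂ)^0 * (n.choose 0 : ℂ) * poch b 0 * poch (c + ((0:ℕ):ℂ)) (n + 1 - 0) := by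
          simp
        rw [h0, ← Finset.sum_range_succ' (fun i => (-1:ℂ)^i * (n.choose i : ℂ) * poch b i *
            poch (c + (i : ℂ)) (n + 1 - i)) (n+1), Finset.sum_range_succ]
        have hz : (-1:ℂ)^(n+1) * (n.choose (n+1) : ℂ) * poch b (n+1) *
            poch (c + ((n+1 : ℕ) : ℂ)) (n + 1 - (n+1)) = 0 := by
          simp [Nat.choose_succ_self]
        rw [hz, add_zero]
        have term : ∀ i ∈ Finset.range (n+1),
            (-1:ℂ)^i * (n.choose i : ℂ) * poch b i * poch (c + (i : ℂ)) (n + 1 - i)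
            = (c + (n:ℂ)) * ((-1:ℂ)^i * (n.choose i : ℂ) * poch b i * poch (c + (i:ℂ)) (n - i)) := by
          intro i hi
          rw [Finset.mem_range] at hi
          have h1 : n + 1 - i = (n - i) + 1 := by omega
          have h2 : poch (c + (i:ℂ)) ((n - i) + 1)
              = poch (c + (i:ℂ)) (n - i) * (c + (n:ℂ)) := by
            rw [poch_succ]
            congr 1
            rw [Nat.cast_sub (by omega : i ≤ n)]
            ring
          rw [h1, h2]
          ring
        rw [Finset.sum_congr rfl term, ← Finset.mul_sum, ih b c]
      rw [add_right_comm, hA, poch_succ]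
      ring

lemma neg_one_pow_sub {N k : ℕ} (hk : k ≤ N) : ((-1:ℂ))^(N-k) = (-1)^N * (-1)^k := by
  rw [← pow_add, show N + k = (N - k) + 2*k by omega, pow_add, pow_mul]
  norm_num

lemma stepL (N : ℕ) (A B C D : ℂ) :
    poch (1 + A - C - N) N *
      ∑ k ∈ Finset.range (N+1), (-1:ℂ)^k * (N.choose k : ℂ) * poch A k * poch B k *
        poch (C + k) (N - k) * poch (D + k) (N - k)
  = poch (C - A) N *
      ∑ j ∈ Finset.range (N+1), (N.choose j : ℂ) * poch A j * poch B j *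
        poch (1 - C - N) (N - j) * poch (D + j) (N - j) := by
  rw [Finset.mul_sum, Finset.mul_sum]
  apply Finset.sum_congr rfl
  intro k hk
  rw [Finset.mem_range] at hk
  have hk' : k ≤ N := by omega
  have e1 : poch (1 + A - C - (N:ℂ)) N = (-1:ℂ)^N * poch (C - A) N := by
    rw [show (1 + A - C - (N:ℂ)) = 1 - (C - A) - (N:ℂ) by ring, poch_reflect]
  have e2 : poch (1 - C - (N:ℂ)) (N - k) = (-1:ℂ)^(N-k) * poch (C + (k:ℂ)) (N - k) := by
    rw [← poch_reflect (C + (k:ℂ)) (N - k)]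
    congr 1
    rw [Nat.cast_sub hk']
    ring
  rw [e1, e2, neg_one_pow_sub hk']
  ring

lemma stepR (N : ℕ) (A B C D : ℂ) :
    poch (C - A) N *
      ∑ k ∈ Finset.range (N+1), (-1:ℂ)^k * (N.choose k : ℂ) * poch A k * poch (D - B) k *
        poch (1 + A - C - N + k) (N - k) * poch (D + k) (N - k)
  = poch (C - A) N *
      ∑ j ∈ Finset.range (N+1), (N.choose j : ℂ) * poch A j * poch B j *
        poch (1 - C - N) (N - j) * poch (D + j) (N - j) := by
  congr 1
  -- expand poch (D - B) k by Chu--Vandermonde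
  have expand : ∀ k ∈ Finset.range (N+1),
      (-1:ℂ)^k * (N.choose k : ℂ) * poch A k * poch (D - B) k *
        poch (1 + A - C - N + k) (N - k) * poch (D + k) (N - k)
      = ∑ j ∈ Finset.range (k+1),
          ((-1:ℂ)^k * (N.choose k : ℂ) * poch A k *
            poch (1 + A - C - (N:ℂ) + k) (N - k) * poch (D + (k:ℂ)) (N - k) *
            ((-1:ℂ)^j * (k.choose j : ℂ) * poch B j * poch (D + (j:ℂ)) (k - j))) := by
    intro k hk
    rw [← chu k B D, Finset.mul_sum, Finset.sum_mul, Finset.sum_mul]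
    exact Finset.sum_congr rfl (fun j hj => by ring)
  rw [Finset.sum_congr rfl expand]
  -- swap the order of summation
  simp only [← Nat.Ico_zero_eq_range]
  rw [← Finset.sum_Ico_Ico_comm 0 (N+1)]
  simp only [Nat.Ico_zero_eq_range]
  apply Finset.sum_congr rfl
  intro j hj
  rw [Finset.mem_range] at hj
  have hj' : j ≤ N := by omega
  -- reindex inner sum
  rw [Finset.sum_Ico_eq_sum_range]
  have hrange : N + 1 - j = (N - j) + 1 := by omega
  rw [hrange]
  have term : ∀ m ∈ Finset.range ((N - j) + 1),
      ((-1:ℂ)^(j+m) * (N.choose (j+m) : ℂ) * poch A (j+m) *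
        poch (1 + A - C - (N:ℂ) + ((j+m : ℕ):ℂ)) (N - (j+m)) *
        poch (D + ((j+m : ℕ):ℂ)) (N - (j+m)) *
        ((-1:ℂ)^j * ((j+m).choose j : ℂ) * poch B j * poch (D + (j:ℂ)) ((j+m) - j)))
      = ((N.choose j : ℂ) * poch A j * poch B j * poch (D + (j:ℂ)) (N - j)) *
          ((-1:ℂ)^m * ((N-j).choose m : ℂ) * poch (A + (j:ℂ)) m *
            poch ((1 + A - C - (N:ℂ) + (j:ℂ)) + (m:ℂ)) ((N - j) - m)) := by
    intro m hm
    rw [Finset.mem_range] at hm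
    have hm' : m ≤ N - j := by omega
    have hjm : j + m ≤ N := by omega
    -- choose identity
    have hch : (N.choose (j+m) : ℂ) * ((j+m).choose j : ℂ)
        = (N.choose j : ℂ) * ((N-j).choose m : ℂ) := by
      have := Nat.choose_mul (n := N) (by omega : j ≤ j + m)
      rw [show j + m - j = m by omega] at this
      exact_mod_cast congrArg (fun x : ℕ => (x : ℂ)) this
    -- sign
    have hs : ((-1:ℂ))^(j+m) * (-1)^j = (-1)^m := by
      rw [← pow_add, show j + m + j = 2*j + m by omega, pow_add, pow_mul]
      norm_num
    -- poch A split
    have hA : poch A (j+m) = poch A j * poch (A + (j:ℂ)) m := poch_add A j m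
    -- E-shift
    have hE : poch (1 + A - C - (N:ℂ) + ((j+m : ℕ):ℂ)) (N - (j+m))
        = poch ((1 + A - C - (N:ℂ) + (j:ℂ)) + (m:ℂ)) ((N - j) - m) := by
      rw [show N - (j+m) = (N - j) - m by omega]
      congr 1
      push_cast
      ring
    -- D combine
    have hD : poch (D + (j:ℂ)) ((j+m) - j) * poch (D + ((j+m : ℕ):ℂ)) (N - (j+m))
        = poch (D + (j:ℂ)) (N - j) := by
      have h := poch_add (D + (j:ℂ)) m ((N - j) - m)
      rw [show m + ((N - j) - m) = N - j by omega] at h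
      rw [show (j+m) - j = m by omega, show N - (j+m) = (N - j) - m by omega,
        show (((j+m) : ℕ):ℂ) = (j:ℂ) + (m:ℂ) by push_cast; ring, ← add_assoc, ← h]
    calc (-1:ℂ)^(j+m) * (N.choose (j+m) : ℂ) * poch A (j+m) *
          poch (1 + A - C - (N:ℂ) + ((j+m : ℕ):ℂ)) (N - (j+m)) *
          poch (D + ((j+m : ℕ):ℂ)) (N - (j+m)) *
          ((-1:ℂ)^j * ((j+m).choose j : ℂ) * poch B j * poch (D + (j:ℂ)) ((j+m) - j))
        = ((-1:ℂ)^(j+m) * (-1)^j) * ((N.choose (j+m) : ℂ) * ((j+m).choose j : ℂ)) *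
            poch A (j+m) *
            poch (1 + A - C - (N:ℂ) + ((j+m : ℕ):ℂ)) (N - (j+m)) * poch B j *
            (poch (D + (j:ℂ)) ((j+m) - j) * poch (D + ((j+m : ℕ):ℂ)) (N - (j+m))) := by ring
      _ = _ := by rw [hs, hch, hA, hE, hD]; ring
  rw [Finset.sum_congr rfl term, ← Finset.mul_sum]
  rw [chu (N - j) (A + (j:ℂ)) (1 + A - C - (N:ℂ) + (j:ℂ))]
  rw [show (1 + A - C - (N:ℂ) + (j:ℂ)) - (A + (j:ℂ)) = 1 - C - (N:ℂ) by ring]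
  ring

theorem F32_transformation (N : ℕ) (hN : 0 < N) (A B C D : ℂ)
    (hC : poch C N ≠ 0) (hD : poch D N ≠ 0)
    (hC' : poch (1 + A - C - N) N ≠ 0) :
    ∑ k ∈ Finset.range (N + 1),
        poch A k * poch B k * poch (-(N : ℂ)) k /
          (poch C k * poch D k * (Nat.factorial k : ℂ)) =
      poch (C - A) N / poch C N *
        ∑ k ∈ Finset.range (N + 1),
          poch A k * poch (D - B) k * poch (-(N : ℂ)) k /
            (poch (1 + A - C - N) k * poch D k * (Nat.factorial k : ℂ)) := by
  have hP : poch C N * poch D N * poch (1 + A - C - (N:ℂ)) N ≠ 0 :=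
    mul_ne_zero (mul_ne_zero hC hD) hC'
  apply mul_left_cancel₀ hP
  have hL : ∀ k ∈ Finset.range (N+1),
      poch C N * poch D N * poch (1 + A - C - (N:ℂ)) N *
        (poch A k * poch B k * poch (-(N : ℂ)) k /
          (poch C k * poch D k * (Nat.factorial k : ℂ)))
      = poch (1 + A - C - (N:ℂ)) N *
          ((-1:ℂ)^k * (N.choose k : ℂ) * poch A k * poch B k *
            poch (C + (k:ℂ)) (N - k) * poch (D + (k:ℂ)) (N - k)) := by
    intro k hk
    rw [Finset.mem_range] at hk
    have hk' : k ≤ N := by omega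
    have hCk : poch C k ≠ 0 := poch_ne_zero_of_le hC hk'
    have hDk : poch D k ≠ 0 := poch_ne_zero_of_le hD hk'
    have hfac : ((Nat.factorial k : ℕ) : ℂ) ≠ 0 :=
      Nat.cast_ne_zero.mpr (Nat.factorial_ne_zero k)
    have hCsplit : poch C N = poch C k * poch (C + (k:ℂ)) (N - k) := by
      have h := poch_add C k (N - k)
      rwa [show k + (N - k) = N by omega] at h
    have hDsplit : poch D N = poch D k * poch (D + (k:ℂ)) (N - k) := by
      have h := poch_add D k (N - k)
      rwa [show k + (N - k) = N by omega] at h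
    rw [poch_neg_nat N hk', hCsplit, hDsplit]
    field_simp
  have hR : ∀ k ∈ Finset.range (N+1),
      poch D N * poch (1 + A - C - (N:ℂ)) N * poch (C - A) N *
        (poch A k * poch (D - B) k * poch (-(N : ℂ)) k /
          (poch (1 + A - C - (N:ℂ)) k * poch D k * (Nat.factorial k : ℂ)))
      = poch (C - A) N *
          ((-1:ℂ)^k * (N.choose k : ℂ) * poch A k * poch (D - B) k *
            poch (1 + A - C - (N:ℂ) + (k:ℂ)) (N - k) * poch (D + (k:ℂ)) (N - k)) := by
    intro k hk
    rw [Finset.mem_range] at hk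
    have hk' : k ≤ N := by omega
    have hEk : poch (1 + A - C - (N:ℂ)) k ≠ 0 := poch_ne_zero_of_le hC' hk'
    have hDk : poch D k ≠ 0 := poch_ne_zero_of_le hD hk'
    have hfac : ((Nat.factorial k : ℕ) : ℂ) ≠ 0 :=
      Nat.cast_ne_zero.mpr (Nat.factorial_ne_zero k)
    have hEsplit : poch (1 + A - C - (N:ℂ)) N
        = poch (1 + A - C - (N:ℂ)) k * poch (1 + A - C - (N:ℂ) + (k:ℂ)) (N - k) := by
      have h := poch_add (1 + A - C - (N:ℂ)) k (N - k)
      rwa [show k + (N - k) = N by omega] at h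
    have hDsplit : poch D N = poch D k * poch (D + (k:ℂ)) (N - k) := by
      have h := poch_add D k (N - k)
      rwa [show k + (N - k) = N by omega] at h
    rw [poch_neg_nat N hk']
    rw [show poch D N * poch (1 + A - C - (N:ℂ)) N * poch (C - A) N
        = (poch D k * poch (D + (k:ℂ)) (N - k)) *
          (poch (1 + A - C - (N:ℂ)) k * poch (1 + A - C - (N:ℂ) + (k:ℂ)) (N - k)) *
          poch (C - A) N by rw [← hDsplit, ← hEsplit]]
    field_simp
  have hq : poch C N * poch D N * poch (1 + A - C - (N:ℂ)) N *
      (poch (C - A) N / poch C N *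
        ∑ k ∈ Finset.range (N + 1),
          poch A k * poch (D - B) k * poch (-(N : ℂ)) k /
            (poch (1 + A - C - (N:ℂ)) k * poch D k * (Nat.factorial k : ℂ)))
      = poch D N * poch (1 + A - C - (N:ℂ)) N * poch (C - A) N *
        ∑ k ∈ Finset.range (N + 1),
          poch A k * poch (D - B) k * poch (-(N : ℂ)) k /
            (poch (1 + A - C - (N:ℂ)) k * poch D k * (Nat.factorial k : ℂ)) := by
    field_simp
  rw [hq]
  conv_lhs => rw [Finset.mul_sum, Finset.sum_congr rfl hL, ← Finset.mul_sum]
  conv_rhs => rw [Finset.mul_sum, Finset.sum_congr rfl hR, ← Finset.mul_sum]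
  exact (stepL N A B C D).trans (stepR N A B C D).symm
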